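/- arXiv:2403.14768 — 2 statements merged into one kernel-verified Lean document; each statement's English description precedes it below -/
import Mathlib

section
/- Fix U > 0 and t_z ≥ 0. If 0 ≤ T < T_N(U,t_z), then Δ = Δ_AF(U,t_z,T) is the unique point at which the function G_T attains its minimum over the interval [0, U/2]. If T ≥ T_N(U,t_z), then Δ = 0 is the unique point at which G_T attains its minimum over [0, U/2]. -/
open Real MeasureTheory Set

noncomputable section

/-- The two-dimensional density of states `N₀(ε)`, extended evenly to `(-4,4)`
and by `0` outside. -/
def N0 (ε : ℝ) : ℝ :=
  if |ε| < 4 then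
    (Real.pi ^ 2)⁻¹ * ∫ u in (-2:ℝ)..(2 - |ε|),
      (Real.sqrt (4 - u ^ 2) * Real.sqrt (4 - (u + |ε|) ^ 2))⁻¹
  else 0

/-- The three-dimensional density of states `N_{t_z}(ε)`. -/
def N3 (tz ε : ℝ) : ℝ :=
  Real.pi⁻¹ * ∫ u in (-2:ℝ)..2, N0 (tz * u + ε) / Real.sqrt (4 - u ^ 2)

/-- `tanh (x / y)` with the convention that it equals `1` when `y = 0`. -/
def thQ (x y : ℝ) : ℝ := if y = 0 then 1 else Real.tanh (x / y)

/-- The tight-binding band relation of the anisotropic 3D model. -/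
def bandE (tz k₁ k₂ k₃ : ℝ) : ℝ :=
  -2 * (Real.cos k₁ + Real.cos k₂) - 2 * tz * Real.cos k₃

/-- The integrand of the Néel-temperature equation, interpreted as `U/(4T)` where the band
relation vanishes. -/
def neelIntegrand (U tz T k₁ k₂ k₃ : ℝ) : ℝ :=
  if bandE tz k₁ k₂ k₃ = 0 then U / (4 * T)
  else U * Real.tanh (bandE tz k₁ k₂ k₃ / (2 * T)) / (2 * bandE tz k₁ k₂ k₃)

/-- The equation characterizing the Néel temperature of the anisotropic 3D model. -/
def neelEq (U tz T : ℝ) : Prop :=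
  1 = (∫ k₁ in (-Real.pi)..Real.pi, ∫ k₂ in (-Real.pi)..Real.pi,
        ∫ k₃ in (-Real.pi)..Real.pi, neelIntegrand U tz T k₁ k₂ k₃) / (2 * Real.pi) ^ 3

/-- The antiferromagnetic mean-field (gap) equation of the anisotropic 3D model. -/
def gapEq (U tz T Δ : ℝ) : Prop :=
  1 = (∫ k₁ in (-Real.pi)..Real.pi, ∫ k₂ in (-Real.pi)..Real.pi,
        ∫ k₃ in (-Real.pi)..Real.pi,
          U * thQ (Real.sqrt (Δ ^ 2 + bandE tz k₁ k₂ k₃ ^ 2)) (2 * T)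
            / (2 * Real.sqrt (Δ ^ 2 + bandE tz k₁ k₂ k₃ ^ 2))) / (2 * Real.pi) ^ 3

/-- The 2D band relation. -/
def bandE2 (k₁ k₂ : ℝ) : ℝ := -2 * (Real.cos k₁ + Real.cos k₂)

/-- The equation characterizing the 2D Néel temperature. -/
def neelEq2 (U T : ℝ) : Prop :=
  1 = (∫ k₁ in (-Real.pi)..Real.pi, ∫ k₂ in (-Real.pi)..Real.pi,
        (if bandE2 k₁ k₂ = 0 then U / (4 * T)
         else U * Real.tanh (bandE2 k₁ k₂ / (2 * T)) / (2 * bandE2 k₁ k₂))) / (2 * Real.pi) ^ 2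

/-- The 2D antiferromagnetic mean-field (gap) equation. -/
def gapEq2 (U T Δ : ℝ) : Prop :=
  1 = (∫ k₁ in (-Real.pi)..Real.pi, ∫ k₂ in (-Real.pi)..Real.pi,
        U * thQ (Real.sqrt (Δ ^ 2 + bandE2 k₁ k₂ ^ 2)) (2 * T)
          / (2 * Real.sqrt (Δ ^ 2 + bandE2 k₁ k₂ ^ 2))) / (2 * Real.pi) ^ 2

/-- The BCS-type function `J(x,y)`. -/
def Jfun (x y : ℝ) : ℝ :=
  ∫ ε in Set.Ioi (0:ℝ),
    (thQ (Real.sqrt (x ^ 2 + ε ^ 2)) (2 * y) / Real.sqrt (x ^ 2 + ε ^ 2)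
      - Real.tanh (ε / 2) / ε)

/-- `f` is the BCS gap-ratio function: for every `y ∈ [0,1)`, `f y` is the unique positive
solution `x` of `J(x,y) = 0`. -/
def IsBCS (f : ℝ → ℝ) : Prop :=
  ∀ y ∈ Set.Ico (0:ℝ) 1,
    0 < f y ∧ Jfun (f y) y = 0 ∧ ∀ x, 0 < x → Jfun x y = 0 → x = f y

/-- The thermodynamic Hartree–Fock free-energy functional `G_T(Δ)` (per site), for `T > 0` and,
separately, for `T = 0`. -/
def Gfun (U tz T Δ : ℝ) : ℝ :=
  if T = 0 then
    -(∫ k₁ in (-Real.pi)..Real.pi, ∫ k₂ in (-Real.pi)..Real.pi,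
        ∫ k₃ in (-Real.pi)..Real.pi,
          Real.sqrt (Δ ^ 2 + bandE tz k₁ k₂ k₃ ^ 2)) / (2 * Real.pi) ^ 3 + Δ ^ 2 / U
  else
    -2 * T * (∫ k₁ in (-Real.pi)..Real.pi, ∫ k₂ in (-Real.pi)..Real.pi,
        ∫ k₃ in (-Real.pi)..Real.pi,
          Real.log (2 * Real.cosh (Real.sqrt (Δ ^ 2 + bandE tz k₁ k₂ k₃ ^ 2) / (2 * T))))
      / (2 * Real.pi) ^ 3 + Δ ^ 2 / U

/-!
Write `G_T(Δ) = -avg_k E_T(Δ² + ε(k)²) + Δ²/U` with `E_0(s) = √s` and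
`E_T(s) = 2T log(2 cosh(√s/(2T)))`. Each `E_T` is strictly concave in `s ≥ 0` (for `T > 0`
because `tanh y / y` is strictly decreasing on `[0, ∞)`, `tanh` being strictly concave there), so it
lies strictly below its tangent lines. Integrating the tangent inequality at `Δ² + ε²` gives
`G_T(x) - G_T(Δ) > (x² - Δ²) (1/U - avg_k E_T'(Δ² + ε(k)²))`. The gap equation says that the
bracket vanishes at `Δ = Δ_AF`; the Néel equation says that it vanishes at `Δ = 0`, `T = T_N`, and
since `E_T'(ε²)` decreases in `T` it is `≥ 0` at `Δ = 0` for all `T ≥ T_N`. Finally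
`E_T'(Δ² + ε²) ≤ 1/(2Δ)` turns the gap equation into `Δ_AF ≤ U/2`.
-/

namespace Real

theorem hasDerivAt_tanh (x : ℝ) : HasDerivAt tanh (cosh x ^ 2)⁻¹ x := by
  have h := (hasDerivAt_sinh x).div (hasDerivAt_cosh x) (cosh_pos x).ne'
  rw [show tanh = sinh / cosh from funext tanh_eq_sinh_div_cosh]
  refine h.congr_deriv ?_
  rw [← sq, ← sq, cosh_sq_sub_sinh_sq, one_div]

theorem differentiable_tanh : Differentiable ℝ tanh :=
  fun x => (hasDerivAt_tanh x).differentiableAt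

theorem continuous_tanh : Continuous tanh := differentiable_tanh.continuous

theorem strictMono_tanh : StrictMono tanh :=
  strictMono_of_deriv_pos fun x => by rw [(hasDerivAt_tanh x).deriv]; positivity

theorem strictConcaveOn_tanh : StrictConcaveOn ℝ (Ici 0) tanh := by
  refine StrictAntiOn.strictConcaveOn_of_deriv (convex_Ici 0) continuous_tanh.continuousOn ?_
  rw [interior_Ici, funext fun x => (hasDerivAt_tanh x).deriv]
  intro x hx y hy hxy
  have := cosh_strictMonoOn (mem_Ici.2 (le_of_lt hx)) (mem_Ici.2 (le_of_lt hy)) hxy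
  have := cosh_pos x
  show (cosh y ^ 2)⁻¹ < (cosh x ^ 2)⁻¹
  gcongr

end Real

/-- `tanh y / y`, extended continuously by `1` at `0`. -/
def tanhc : ℝ → ℝ := dslope tanh 0

theorem tanhc_zero : tanhc 0 = 1 := by
  simp [tanhc, dslope_same, (hasDerivAt_tanh 0).deriv]

theorem tanhc_of_ne_zero {y : ℝ} (hy : y ≠ 0) : tanhc y = tanh y / y := by
  rw [tanhc, dslope_of_ne _ hy, slope_def_field, tanh_zero, sub_zero, sub_zero]

theorem mul_tanhc (y : ℝ) : y * tanhc y = tanh y := by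
  rcases eq_or_ne y 0 with rfl | hy
  · simp
  · rw [tanhc_of_ne_zero hy, mul_div_cancel₀ _ hy]

theorem tanhc_abs (y : ℝ) : tanhc |y| = tanhc y := by
  rcases abs_choice y with h | h <;> rw [h]
  rcases eq_or_ne y 0 with rfl | hy
  · simp
  · rw [tanhc_of_ne_zero hy, tanhc_of_ne_zero (neg_ne_zero.2 hy), tanh_neg, neg_div_neg_eq]

theorem continuous_tanhc : Continuous tanhc := by
  rw [← continuousOn_univ, tanhc, continuousOn_dslope Filter.univ_mem]
  exact ⟨continuous_tanh.continuousOn, differentiable_tanh 0⟩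

theorem tanhc_strictAntiOn : StrictAntiOn tanhc (Ici 0) := by
  intro x hx y hy hxy
  have hy0 : y ≠ 0 := (lt_of_le_of_lt hx hxy).ne'
  rw [tanhc, dslope_of_ne _ hy0]
  rcases (mem_Ici.1 hx).eq_or_lt with rfl | hx0
  · rw [dslope_same, (hasDerivAt_tanh 0).deriv]
    exact strictConcaveOn_tanh.slope_lt_of_hasDerivAt hx hy hxy (hasDerivAt_tanh 0)
  · rw [dslope_of_ne _ hx0.ne', slope_def_field, slope_def_field]
    exact strictConcaveOn_tanh.secant_strict_mono self_mem_Ici hx hy hx0.ne' hy0 hxy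

theorem log_cosh_lt_tangent {a b : ℝ} (ha : 0 ≤ a) (hb : 0 ≤ b) (hab : a ≠ b) :
    log (cosh a) < log (cosh b) + tanhc b / 2 * (a ^ 2 - b ^ 2) := by
  set F : ℝ → ℝ := fun y => log (cosh b) + tanhc b / 2 * (y ^ 2 - b ^ 2) - log (cosh y)
  have hF : ∀ y, HasDerivAt F (y * (tanhc b - tanhc y)) y := fun y => by
    have hlog := (hasDerivAt_cosh y).log (cosh_pos y).ne'
    have hsq := (((hasDerivAt_pow 2 y).sub_const (b ^ 2)).const_mul (tanhc b / 2)).const_add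
      (log (cosh b))
    refine (hsq.sub hlog).congr_deriv ?_
    rw [mul_sub, mul_tanhc, tanh_eq_sinh_div_cosh]
    push_cast
    ring
  have hFc : Continuous F := continuous_iff_continuousAt.2 fun y => (hF y).continuousAt
  suffices 0 < F a by simp only [F] at this; linarith
  rcases hab.lt_or_gt with h | h
  · have hanti : StrictAntiOn F (Icc 0 b) :=
      strictAntiOn_of_deriv_neg (convex_Icc 0 b) hFc.continuousOn fun y hy => by
        rw [interior_Icc] at hy
        rw [(hF y).deriv]
        exact mul_neg_of_pos_of_neg hy.1 (sub_neg.2 (tanhc_strictAntiOn hy.1.le hb hy.2))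
    simpa [F] using hanti ⟨ha, h.le⟩ ⟨hb, le_rfl⟩ h
  · have hmono : StrictMonoOn F (Ici b) :=
      strictMonoOn_of_deriv_pos (convex_Ici b) hFc.continuousOn fun y hy => by
        rw [interior_Ici] at hy
        rw [(hF y).deriv]
        exact mul_pos (hb.trans_lt hy) (sub_pos.2 (tanhc_strictAntiOn hb (hb.trans hy.le) hy))
    simpa [F] using hmono self_mem_Ici h.le h

theorem sqrt_lt_tangent {u v : ℝ} (hu : 0 ≤ u) (hv : 0 < v) (huv : u ≠ v) :
    √u < √v + (u - v) / (2 * √v) := by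
  have hsv : 0 < √v := sqrt_pos.2 hv
  have hne : √u - √v ≠ 0 := sub_ne_zero.2 fun h => huv (by rw [← sq_sqrt hu, ← sq_sqrt hv.le, h])
  rw [← sub_lt_iff_lt_add', lt_div_iff₀ (by positivity)]
  nlinarith [pow_pos (abs_pos.2 hne) 2, sq_abs (√u - √v), sq_sqrt hu, sq_sqrt hv.le]

def thermalEnergy (T s : ℝ) : ℝ :=
  if T = 0 then √s else 2 * T * log (2 * cosh (√s / (2 * T)))

def thermalEnergyDeriv (T s : ℝ) : ℝ :=
  if T = 0 then 1 / (2 * √s) else tanhc (√s / (2 * T)) / (4 * T)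

@[fun_prop]
theorem continuous_thermalEnergy (T : ℝ) : Continuous (thermalEnergy T) := by
  unfold thermalEnergy
  split_ifs
  · exact continuous_sqrt
  · exact continuous_const.mul
      ((continuous_const.mul (continuous_cosh.comp (continuous_sqrt.div_const _))).log
        fun s => (mul_pos two_pos (cosh_pos _)).ne')

theorem continuous_thermalEnergyDeriv {T : ℝ} (hT : T ≠ 0) : Continuous (thermalEnergyDeriv T) := by
  rw [show thermalEnergyDeriv T = fun s => tanhc (√s / (2 * T)) / (4 * T) from
    funext fun s => if_neg hT]
  exact (continuous_tanhc.comp (continuous_sqrt.div_const _)).div_const _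

theorem continuousOn_thermalEnergyDeriv (T : ℝ) : ContinuousOn (thermalEnergyDeriv T) (Ioi 0) := by
  rcases eq_or_ne T 0 with rfl | hT
  · rw [show thermalEnergyDeriv 0 = fun s => 1 / (2 * √s) from funext fun s => if_pos rfl]
    exact continuousOn_const.div (continuous_const.mul continuous_sqrt).continuousOn
      fun s hs => by have := sqrt_pos.2 (mem_Ioi.1 hs); positivity
  · exact (continuous_thermalEnergyDeriv hT).continuousOn

theorem continuous_thermalEnergyDeriv_add_sq (T : ℝ) {c : ℝ} (hc : 0 < c) :
    Continuous fun e => thermalEnergyDeriv T (c + e ^ 2) :=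
  (continuousOn_thermalEnergyDeriv T).comp_continuous (by fun_prop)
    fun e => mem_Ioi.2 (by positivity)

theorem thQ_le_one (x y : ℝ) : thQ x y ≤ 1 := by
  unfold thQ
  split_ifs
  exacts [le_rfl, (tanh_lt_one _).le]

theorem thermalEnergyDeriv_eq_thQ {T s : ℝ} (hs : 0 < s) :
    thermalEnergyDeriv T s = thQ (√s) (2 * T) / (2 * √s) := by
  have hs' := sqrt_pos.2 hs
  rcases eq_or_ne T 0 with rfl | hT
  · simp [thermalEnergyDeriv, thQ]
  · rw [thermalEnergyDeriv, if_neg hT, thQ, if_neg (by positivity),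
      tanhc_of_ne_zero (by positivity)]
    field_simp
    ring

theorem thermalEnergyDeriv_add_sq_le (T : ℝ) {Δ : ℝ} (hΔ : 0 < Δ) (e : ℝ) :
    thermalEnergyDeriv T (Δ ^ 2 + e ^ 2) ≤ 1 / (2 * Δ) :=
  calc thermalEnergyDeriv T (Δ ^ 2 + e ^ 2) ≤ 1 / (2 * √(Δ ^ 2 + e ^ 2)) := by
        rw [thermalEnergyDeriv_eq_thQ (by positivity)]
        gcongr
        exact thQ_le_one _ _
    _ ≤ 1 / (2 * Δ) := by
        gcongr
        exact le_sqrt_of_sq_le (le_add_of_nonneg_right (sq_nonneg e))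

theorem thermalEnergyDeriv_le_of_le {s T₁ T₂ : ℝ} (hs : 0 ≤ s) (hT₁ : 0 < T₁) (hT : T₁ ≤ T₂) :
    thermalEnergyDeriv T₂ s ≤ thermalEnergyDeriv T₁ s := by
  have hT₂ : 0 < T₂ := hT₁.trans_le hT
  rcases hs.eq_or_lt with rfl | hs
  · simp only [thermalEnergyDeriv, hT₁.ne', hT₂.ne', if_false, sqrt_zero, zero_div, tanhc_zero]
    gcongr
  · rw [thermalEnergyDeriv_eq_thQ hs, thermalEnergyDeriv_eq_thQ hs, thQ, thQ,
      if_neg (by positivity), if_neg (by positivity)]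
    gcongr
    exact strictMono_tanh.monotone (by gcongr)

theorem thermalEnergy_lt_tangent {T u v : ℝ} (hT : 0 ≤ T) (hu : 0 ≤ u) (hv : 0 ≤ v) (huv : u ≠ v)
    (hTv : 0 < T ∨ 0 < v) :
    thermalEnergy T u < thermalEnergy T v + (u - v) * thermalEnergyDeriv T v := by
  rcases hT.eq_or_lt with rfl | hT
  · simp only [thermalEnergy, thermalEnergyDeriv, if_true, mul_one_div]
    exact sqrt_lt_tangent hu (hTv.resolve_left (lt_irrefl 0)) huv
  · have hne : √u / (2 * T) ≠ √v / (2 * T) := by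
      rwa [Ne, div_left_inj' (by positivity), sqrt_inj hu hv]
    have hlog := mul_lt_mul_of_pos_left (log_cosh_lt_tangent (by positivity) (by positivity) hne)
      (by positivity : 0 < 2 * T)
    have hsq : ∀ w, 0 ≤ w → (√w / (2 * T)) ^ 2 = w / (2 * T) ^ 2 := fun w hw => by
      rw [div_pow, sq_sqrt hw]
    have hslope : 2 * T * (tanhc (√v / (2 * T)) / 2 * ((√u / (2 * T)) ^ 2 - (√v / (2 * T)) ^ 2))
        = (u - v) * (tanhc (√v / (2 * T)) / (4 * T)) := by
      rw [hsq u hu, hsq v hv]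
      field_simp
      ring
    simp only [thermalEnergy, thermalEnergyDeriv, hT.ne', if_false,
      log_mul two_ne_zero (cosh_pos _).ne']
    linarith

@[fun_prop]
theorem Continuous.bandE {α : Type*} [TopologicalSpace α] (tz : ℝ) {f₁ f₂ f₃ : α → ℝ}
    (h₁ : Continuous f₁) (h₂ : Continuous f₂) (h₃ : Continuous f₃) :
    Continuous fun a => bandE tz (f₁ a) (f₂ a) (f₃ a) := by
  unfold _root_.bandE
  fun_prop

theorem intervalIntegral_mono_of_continuous {f g : ℝ → ℝ} {a b : ℝ} (hab : a ≤ b)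
    (hf : Continuous f) (hg : Continuous g) (h : ∀ x, f x ≤ g x) :
    ∫ x in a..b, f x ≤ ∫ x in a..b, g x :=
  intervalIntegral.integral_mono hab (hf.intervalIntegrable _ _) (hg.intervalIntegrable _ _) h

theorem intervalIntegral_lt_of_forall_lt {f g : ℝ → ℝ} {a b : ℝ} (hab : a < b)
    (hf : Continuous f) (hg : Continuous g) (h : ∀ x, f x < g x) :
    ∫ x in a..b, f x < ∫ x in a..b, g x :=
  intervalIntegral.integral_lt_integral_of_continuousOn_of_le_of_exists_lt hab hf.continuousOn
    hg.continuousOn (fun x _ => (h x).le) ⟨a, left_mem_Icc.2 hab.le, h a⟩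

def cubeIntegral (F : ℝ → ℝ → ℝ → ℝ) : ℝ :=
  ∫ k₁ in (-π)..π, ∫ k₂ in (-π)..π, ∫ k₃ in (-π)..π, F k₁ k₂ k₃

section cubeIntegral

variable {F G : ℝ → ℝ → ℝ → ℝ}

theorem cubeIntegral_const_mul (c : ℝ) (F : ℝ → ℝ → ℝ → ℝ) :
    cubeIntegral (fun k₁ k₂ k₃ => c * F k₁ k₂ k₃) = c * cubeIntegral F := by
  simp only [cubeIntegral, intervalIntegral.integral_const_mul]

theorem cubeIntegral_const (c : ℝ) : cubeIntegral (fun _ _ _ => c) = (2 * π) ^ 3 * c := by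
  simp only [cubeIntegral, intervalIntegral.integral_const, smul_eq_mul]
  ring

theorem cubeIntegral_add (hF : Continuous fun k : ℝ × ℝ × ℝ => F k.1 k.2.1 k.2.2)
    (hG : Continuous fun k : ℝ × ℝ × ℝ => G k.1 k.2.1 k.2.2) :
    cubeIntegral (fun k₁ k₂ k₃ => F k₁ k₂ k₃ + G k₁ k₂ k₃) = cubeIntegral F + cubeIntegral G := by
  unfold cubeIntegral
  rw [← intervalIntegral.integral_add ((by fun_prop : Continuous _).intervalIntegrable _ _)
    ((by fun_prop : Continuous _).intervalIntegrable _ _)]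
  refine intervalIntegral.integral_congr fun k₁ _ => ?_
  rw [← intervalIntegral.integral_add ((by fun_prop : Continuous _).intervalIntegrable _ _)
    ((by fun_prop : Continuous _).intervalIntegrable _ _)]
  refine intervalIntegral.integral_congr fun k₂ _ => ?_
  exact intervalIntegral.integral_add ((by fun_prop : Continuous _).intervalIntegrable _ _)
    ((by fun_prop : Continuous _).intervalIntegrable _ _)

theorem cubeIntegral_mono (hF : Continuous fun k : ℝ × ℝ × ℝ => F k.1 k.2.1 k.2.2)
    (hG : Continuous fun k : ℝ × ℝ × ℝ => G k.1 k.2.1 k.2.2)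
    (h : ∀ k₁ k₂ k₃, F k₁ k₂ k₃ ≤ G k₁ k₂ k₃) : cubeIntegral F ≤ cubeIntegral G := by
  have hπ : -π ≤ π := by linarith [pi_pos]
  exact intervalIntegral_mono_of_continuous hπ (by fun_prop) (by fun_prop) fun k₁ =>
    intervalIntegral_mono_of_continuous hπ (by fun_prop) (by fun_prop) fun k₂ =>
      intervalIntegral_mono_of_continuous hπ (by fun_prop) (by fun_prop) fun k₃ => h k₁ k₂ k₃

theorem cubeIntegral_lt (hF : Continuous fun k : ℝ × ℝ × ℝ => F k.1 k.2.1 k.2.2)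
    (hG : Continuous fun k : ℝ × ℝ × ℝ => G k.1 k.2.1 k.2.2)
    (h : ∀ k₁ k₂ k₃, F k₁ k₂ k₃ < G k₁ k₂ k₃) : cubeIntegral F < cubeIntegral G := by
  have hπ : -π < π := by linarith [pi_pos]
  exact intervalIntegral_lt_of_forall_lt hπ (by fun_prop) (by fun_prop) fun k₁ =>
    intervalIntegral_lt_of_forall_lt hπ (by fun_prop) (by fun_prop) fun k₂ =>
      intervalIntegral_lt_of_forall_lt hπ (by fun_prop) (by fun_prop) fun k₃ => h k₁ k₂ k₃

theorem cubeIntegral_eq_div_of_one_eq {U : ℝ}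
    (h : 1 = cubeIntegral (fun k₁ k₂ k₃ => U * F k₁ k₂ k₃) / (2 * π) ^ 3) :
    cubeIntegral F = (2 * π) ^ 3 / U := by
  have hd : (2 * π) ^ 3 ≠ 0 := by positivity
  rw [cubeIntegral_const_mul, eq_div_iff hd, one_mul] at h
  rw [eq_div_iff (left_ne_zero_of_mul (h ▸ hd)), mul_comm, h]

end cubeIntegral

theorem Gfun_eq (U tz T Δ : ℝ) : Gfun U tz T Δ =
    -cubeIntegral (fun k₁ k₂ k₃ => thermalEnergy T (Δ ^ 2 + bandE tz k₁ k₂ k₃ ^ 2))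
      / (2 * π) ^ 3 + Δ ^ 2 / U := by
  rcases eq_or_ne T 0 with rfl | hT
  · simp only [Gfun, thermalEnergy, if_true]
    rfl
  · simp only [Gfun, thermalEnergy, hT, if_false, cubeIntegral_const_mul]
    unfold cubeIntegral
    ring

theorem cubeIntegral_thermalEnergyDeriv_of_gapEq {U tz T Δ : ℝ} (hΔ : 0 < Δ)
    (h : gapEq U tz T Δ) :
    cubeIntegral (fun k₁ k₂ k₃ => thermalEnergyDeriv T (Δ ^ 2 + bandE tz k₁ k₂ k₃ ^ 2))
      = (2 * π) ^ 3 / U := by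
  have hs : ∀ e : ℝ, 0 < Δ ^ 2 + e ^ 2 := fun e => by positivity
  refine cubeIntegral_eq_div_of_one_eq ?_
  simpa only [gapEq, cubeIntegral, thermalEnergyDeriv_eq_thQ, hs, mul_div_assoc] using h

theorem neelIntegrand_eq {U tz T : ℝ} (hT : 0 < T) (k₁ k₂ k₃ : ℝ) :
    neelIntegrand U tz T k₁ k₂ k₃ = U * thermalEnergyDeriv T (bandE tz k₁ k₂ k₃ ^ 2) := by
  have habs : |bandE tz k₁ k₂ k₃ / (2 * T)| = √(bandE tz k₁ k₂ k₃ ^ 2) / (2 * T) := by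
    rw [abs_div, abs_of_pos (by positivity : (0 : ℝ) < 2 * T), sqrt_sq_eq_abs]
  rw [neelIntegrand, thermalEnergyDeriv, if_neg hT.ne', ← habs, tanhc_abs]
  split_ifs with hε
  · rw [hε, zero_div, tanhc_zero]
    ring
  · rw [tanhc_of_ne_zero (by positivity)]
    field_simp
    ring

theorem cubeIntegral_thermalEnergyDeriv_of_neelEq {U tz T : ℝ} (hT : 0 < T)
    (h : neelEq U tz T) :
    cubeIntegral (fun k₁ k₂ k₃ => thermalEnergyDeriv T (bandE tz k₁ k₂ k₃ ^ 2))
      = (2 * π) ^ 3 / U :=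
  cubeIntegral_eq_div_of_one_eq (by simpa only [neelEq, neelIntegrand_eq hT, cubeIntegral] using h)

theorem le_half_of_cubeIntegral_thermalEnergyDeriv {U tz T Δ : ℝ} (hU : 0 < U) (hΔ : 0 < Δ)
    (h : cubeIntegral (fun k₁ k₂ k₃ => thermalEnergyDeriv T (Δ ^ 2 + bandE tz k₁ k₂ k₃ ^ 2))
      = (2 * π) ^ 3 / U) :
    Δ ≤ U / 2 := by
  have hle := cubeIntegral_mono
    (F := fun k₁ k₂ k₃ => thermalEnergyDeriv T (Δ ^ 2 + bandE tz k₁ k₂ k₃ ^ 2))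
    (G := fun _ _ _ => 1 / (2 * Δ))
    ((continuous_thermalEnergyDeriv_add_sq T (by positivity)).comp (by fun_prop))
    continuous_const fun k₁ k₂ k₃ => thermalEnergyDeriv_add_sq_le T hΔ _
  rw [h, cubeIntegral_const, mul_one_div, div_le_div_iff_of_pos_left (by positivity) hU
    (by positivity)] at hle
  linarith

theorem Gfun_lt_Gfun_of_tangent {U tz T Δ x : ℝ} {k : ℝ → ℝ} (hk : Continuous k)
    (hk_int : cubeIntegral (fun k₁ k₂ k₃ => k (bandE tz k₁ k₂ k₃)) = (2 * π) ^ 3 / U)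
    (htangent : ∀ e, thermalEnergy T (x ^ 2 + e ^ 2)
      < thermalEnergy T (Δ ^ 2 + e ^ 2) + (x ^ 2 - Δ ^ 2) * k e) :
    Gfun U tz T Δ < Gfun U tz T x := by
  have hlt := cubeIntegral_lt (by fun_prop) (by fun_prop) fun k₁ k₂ k₃ =>
    htangent (bandE tz k₁ k₂ k₃)
  rw [cubeIntegral_add (by fun_prop) (by fun_prop), cubeIntegral_const_mul, hk_int] at hlt
  rw [Gfun_eq, Gfun_eq, ← sub_pos]
  set IΔ := cubeIntegral fun k₁ k₂ k₃ => thermalEnergy T (Δ ^ 2 + bandE tz k₁ k₂ k₃ ^ 2)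
  set Ix := cubeIntegral fun k₁ k₂ k₃ => thermalEnergy T (x ^ 2 + bandE tz k₁ k₂ k₃ ^ 2)
  have hd : (0 : ℝ) < (2 * π) ^ 3 := by positivity
  have : -Ix / (2 * π) ^ 3 + x ^ 2 / U - (-IΔ / (2 * π) ^ 3 + Δ ^ 2 / U)
      = (IΔ + (x ^ 2 - Δ ^ 2) * ((2 * π) ^ 3 / U) - Ix) / (2 * π) ^ 3 := by
    field_simp
    ring
  rw [this]
  exact div_pos (by linarith) hd

theorem Gfun_minimizer_general (U tz : ℝ) (hU : 0 < U)
    (TN : ℝ) (hTNpos : 0 < TN) (hTN : neelEq U tz TN) :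
    (∀ T : ℝ, 0 ≤ T → T < TN → ∀ Δ : ℝ, 0 < Δ → gapEq U tz T Δ →
      Δ ∈ Set.Icc (0:ℝ) (U / 2) ∧
      ∀ x ∈ Set.Icc (0:ℝ) (U / 2), x ≠ Δ → Gfun U tz T Δ < Gfun U tz T x) ∧
    (∀ T : ℝ, TN ≤ T →
      ∀ x ∈ Set.Icc (0:ℝ) (U / 2), x ≠ 0 → Gfun U tz T 0 < Gfun U tz T x) := by
  refine ⟨fun T hT _ Δ hΔ hgap => ?_, fun T hTNT x hx hx0 => ?_⟩
  · have hk_int := cubeIntegral_thermalEnergyDeriv_of_gapEq hΔ hgap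
    refine ⟨⟨hΔ.le, le_half_of_cubeIntegral_thermalEnergyDeriv hU hΔ hk_int⟩, fun x hx hxΔ => ?_⟩
    have hsq : x ^ 2 ≠ Δ ^ 2 := by
      rwa [Ne, sq_eq_sq₀ hx.1 hΔ.le]
    refine Gfun_lt_Gfun_of_tangent (k := fun e => thermalEnergyDeriv T (Δ ^ 2 + e ^ 2))
      (continuous_thermalEnergyDeriv_add_sq T (by positivity)) hk_int fun e => ?_
    simpa only [add_sub_add_right_eq_sub] using thermalEnergy_lt_tangent hT (by positivity)
      (by positivity) (fun h => hsq (add_right_cancel h)) (Or.inr (by positivity))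
  · have hT : 0 < T := hTNpos.trans_le hTNT
    refine Gfun_lt_Gfun_of_tangent (k := fun e => thermalEnergyDeriv TN (e ^ 2))
      ((continuous_thermalEnergyDeriv hTNpos.ne').comp (continuous_pow 2))
      (cubeIntegral_thermalEnergyDeriv_of_neelEq hTNpos hTN) fun e => ?_
    have hx2 : x ^ 2 + e ^ 2 ≠ e ^ 2 := by simpa using hx0
    have htangent := thermalEnergy_lt_tangent hT.le (by positivity) (sq_nonneg e) hx2 (Or.inl hT)
    have hanti := mul_le_mul_of_nonneg_left
      (thermalEnergyDeriv_le_of_le (sq_nonneg e) hTNpos hTNT) (sq_nonneg x)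
    rw [add_sub_cancel_right] at htangent
    rw [zero_pow two_ne_zero, zero_add, sub_zero]
    linarith

/-- Lemma 3.4: below the Néel temperature, `Δ_AF` is the unique minimizer of `G_T` on
`[0, U/2]`; at or above it, `0` is the unique minimizer. -/
theorem Gfun_minimizer (U tz : ℝ) (hU : 0 < U) (htz : 0 ≤ tz)
    (TN : ℝ) (hTNpos : 0 < TN) (hTN : neelEq U tz TN) :
    (∀ T : ℝ, 0 ≤ T → T < TN → ∀ Δ : ℝ, 0 < Δ → gapEq U tz T Δ →
      Δ ∈ Set.Icc (0:ℝ) (U / 2) ∧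
      ∀ x ∈ Set.Icc (0:ℝ) (U / 2), x ≠ Δ → Gfun U tz T Δ < Gfun U tz T x) ∧
    (∀ T : ℝ, TN ≤ T →
      ∀ x ∈ Set.Icc (0:ℝ) (U / 2), x ≠ 0 → Gfun U tz T 0 < Gfun U tz T x) :=
  Gfun_minimizer_general U tz hU TN hTNpos hTN
end
end

section
/- (a) For every r > 0 there exists a constant C > 0 such that ∫₀² (1 + |ln ε|) · tanh(√(x² + ε²)/(2y))/√(x² + ε²) dε ≤ C for all x ∈ [0,2] and y ∈ [0,1] with √(x² + y²) ≥ r. (b) There exist constants c > 0 and r > 0 such that ∫₀² tanh(√(x² + ε²)/(2y))/√(x² + ε²) dε ≥ c·|ln(x² + y²)| for all x ∈ [0,2] and y ∈ [0,1] with 0 < √(x² + y²) ≤ r. -/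
/-!
Since `tanh t ≤ min 1 t` for `t ≥ 0`, the kernel `K(x,y,ε) = tanh(√(x²+ε²)/(2y))/√(x²+ε²)` is at
most `min (1/x) (1/(2y)) ≤ 2/(x+y)`, which is bounded once `(x,y)` stays away from the origin;
as `1 + |ln ε|` is integrable on `(0,2)`, this gives (a). For `ε ≥ √(x²+y²)` the argument of
`tanh` is at least `1/2` and `√(x²+ε²) ≤ 2ε`, so `K ≥ tanh(1/2)/(2ε)`; integrating over
`(√(x²+y²), 1)` gives `(tanh(1/2)/4) |ln(x²+y²)|`, which is (b).
-/

open Real MeasureTheory Set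

noncomputable section

theorem Real.continuous_tanh_s18 : Continuous tanh := by
  rw [show tanh = fun x => sinh x / cosh x from funext tanh_eq_sinh_div_cosh]
  exact continuous_sinh.div continuous_cosh fun x => (cosh_pos x).ne'

theorem Real.tanh_strictMono : StrictMono tanh := fun a b hab => by
  rwa [← artanh_lt_artanh_iff ⟨neg_one_lt_tanh a, tanh_lt_one a⟩
    ⟨neg_one_lt_tanh b, tanh_lt_one b⟩, artanh_tanh, artanh_tanh]

theorem Real.tanh_pos {x : ℝ} (hx : 0 < x) : 0 < tanh x := by
  simpa using tanh_strictMono hx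

theorem Real.tanh_nonneg {x : ℝ} (hx : 0 ≤ x) : 0 ≤ tanh x := by
  simpa using tanh_strictMono.monotone hx

/-- `x cosh x - sinh x` vanishes at `0` and has derivative `x sinh x ≥ 0` on `[0, ∞)`. -/
theorem Real.tanh_le_self {x : ℝ} (hx : 0 ≤ x) : tanh x ≤ x := by
  have hderiv : ∀ t, HasDerivAt (fun t => t * cosh t - sinh t) (t * sinh t) t := fun t =>
    (((hasDerivAt_id' t).mul (hasDerivAt_cosh t)).sub (hasDerivAt_sinh t)).congr_deriv (by ring)
  have hmono : MonotoneOn (fun t => t * cosh t - sinh t) (Ici 0) :=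
    monotoneOn_of_hasDerivWithinAt_nonneg (convex_Ici 0)
      (fun t _ => (hderiv t).continuousAt.continuousWithinAt)
      (fun t _ => (hderiv t).hasDerivWithinAt)
      (fun t ht => by
        rw [interior_Ici] at ht
        exact mul_nonneg ht.le (sinh_nonneg_iff.2 ht.le))
  have h := hmono (mem_Ici.2 le_rfl) hx hx
  rw [tanh_eq_sinh_div_cosh, div_le_iff₀ (cosh_pos x)]
  simp only [zero_mul, sinh_zero, sub_zero] at h
  linarith

theorem Real.sqrt_sq_add_sq_le_add {x y : ℝ} (hx : 0 ≤ x) (hy : 0 ≤ y) :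
    √(x ^ 2 + y ^ 2) ≤ x + y :=
  (sqrt_le_left (add_nonneg hx hy)).2 (by nlinarith)

theorem continuous_thQ_left (b : ℝ) : Continuous (thQ · b) := by
  unfold thQ
  split_ifs
  · exact continuous_const
  · exact continuous_tanh_s18.comp (continuous_id.div_const b)

theorem thQ_nonneg {a b : ℝ} (ha : 0 ≤ a) (hb : 0 ≤ b) : 0 ≤ thQ a b := by
  unfold thQ
  split_ifs
  · exact zero_le_one
  · exact tanh_nonneg (div_nonneg ha hb)

theorem thQ_le_one_s18 (a b : ℝ) : thQ a b ≤ 1 := by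
  unfold thQ
  split_ifs
  exacts [le_rfl, (tanh_lt_one _).le]

theorem tanh_le_thQ {a b c : ℝ} (hb : 0 ≤ b) (h : c * b ≤ a) : tanh c ≤ thQ a b := by
  unfold thQ
  split_ifs with hb0
  · exact (tanh_lt_one c).le
  · exact tanh_strictMono.monotone ((le_div_iff₀ (lt_of_le_of_ne hb (Ne.symm hb0))).2 h)

theorem thQ_div_le_inv {a : ℝ} (ha : 0 ≤ a) (b : ℝ) : thQ a b / a ≤ a⁻¹ := by
  rw [div_eq_mul_inv]
  exact mul_le_of_le_one_left (inv_nonneg.2 ha) (thQ_le_one_s18 a b)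

theorem thQ_div_le_inv_right {a b : ℝ} (ha : 0 ≤ a) (hb : 0 < b) : thQ a b / a ≤ b⁻¹ := by
  rw [thQ, if_neg hb.ne']
  rcases ha.eq_or_lt with rfl | ha
  · simpa using hb.le
  calc tanh (a / b) / a ≤ a / b / a := by gcongr; exact tanh_le_self (by positivity)
    _ = b⁻¹ := by field_simp

def bcsKernel (x y ε : ℝ) : ℝ := thQ √(x ^ 2 + ε ^ 2) (2 * y) / √(x ^ 2 + ε ^ 2)

theorem measurable_bcsKernel (x y : ℝ) : Measurable (bcsKernel x y) := by
  have hs : Continuous fun ε : ℝ => √(x ^ 2 + ε ^ 2) := by fun_prop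
  exact ((continuous_thQ_left _).comp hs).measurable.div hs.measurable

theorem bcsKernel_nonneg (x : ℝ) {y : ℝ} (hy : 0 ≤ y) (ε : ℝ) : 0 ≤ bcsKernel x y ε :=
  div_nonneg (thQ_nonneg (sqrt_nonneg _) (by positivity)) (sqrt_nonneg _)

theorem bcsKernel_le {x y : ℝ} (hx : 0 ≤ x) (hxy : 0 < x + y) (ε : ℝ) :
    bcsKernel x y ε ≤ 2 / (x + y) := by
  have hxs : x ≤ √(x ^ 2 + ε ^ 2) := (le_sqrt hx (by positivity)).2 (by nlinarith)
  rcases le_total y x with hyx | hxy'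
  · have hx0 : 0 < x := by linarith
    calc bcsKernel x y ε ≤ (√(x ^ 2 + ε ^ 2))⁻¹ := thQ_div_le_inv (sqrt_nonneg _) _
      _ ≤ x⁻¹ := inv_anti₀ hx0 hxs
      _ ≤ 2 / (x + y) := by rw [inv_eq_one_div, div_le_div_iff₀ hx0 hxy]; linarith
  · have hy0 : 0 < 2 * y := by linarith
    calc bcsKernel x y ε ≤ (2 * y)⁻¹ := thQ_div_le_inv_right (sqrt_nonneg _) hy0
      _ ≤ 2 / (x + y) := by rw [inv_eq_one_div, div_le_div_iff₀ hy0 hxy]; linarith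

theorem le_bcsKernel {x y ε : ℝ} (hx : 0 ≤ x) (hy : 0 ≤ y) (hxε : x ≤ ε) (hyε : y ≤ ε)
    (hε : 0 < ε) :
    tanh (1 / 2) / 2 * ε⁻¹ ≤ bcsKernel x y ε := by
  have hεs : ε ≤ √(x ^ 2 + ε ^ 2) := (le_sqrt hε.le (by positivity)).2 (by nlinarith)
  have hs2ε : √(x ^ 2 + ε ^ 2) ≤ 2 * ε := (sqrt_le_left (by positivity)).2 (by nlinarith)
  have hT : tanh (1 / 2) ≤ thQ √(x ^ 2 + ε ^ 2) (2 * y) :=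
    tanh_le_thQ (by positivity) (by linarith)
  rw [← div_eq_mul_inv, div_div]
  exact div_le_div₀ (thQ_nonneg (sqrt_nonneg _) (by positivity)) hT (hε.trans_le hεs) hs2ε

theorem integrableOn_bcsKernel {x y : ℝ} (hx : 0 ≤ x) (hy : 0 ≤ y) (hxy : 0 < x + y)
    {s : Set ℝ} (hs : volume s ≠ ⊤) : IntegrableOn (bcsKernel x y) s :=
  Measure.integrableOn_of_bounded hs (measurable_bcsKernel x y).aestronglyMeasurable
    (ae_of_all _ fun ε => by
      rw [norm_of_nonneg (bcsKernel_nonneg x hy ε)]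
      exact bcsKernel_le hx hxy ε)

theorem intervalIntegrable_one_add_abs_log (a b : ℝ) :
    IntervalIntegrable (fun ε => 1 + |log ε|) volume a b :=
  intervalIntegrable_const.add intervalIntegral.intervalIntegrable_log'.abs

theorem setIntegral_one_add_abs_log_mul_bcsKernel_le {x y r a b : ℝ} (hx : 0 ≤ x) (hy : 0 ≤ y)
    (hr : 0 < r) (hrxy : r ≤ x + y) (hab : a ≤ b) :
    ∫ ε in Ioo a b, (1 + |log ε|) * bcsKernel x y ε ≤
      2 / r * ∫ ε in a..b, (1 + |log ε|) := by
  rw [intervalIntegral.integral_of_le hab, integral_Ioc_eq_integral_Ioo, ← integral_const_mul]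
  refine integral_mono_of_nonneg
    (ae_of_all _ fun ε => mul_nonneg (by positivity) (bcsKernel_nonneg x hy ε))
    (((intervalIntegrable_iff_integrableOn_Ioo_of_le hab).1
      (intervalIntegrable_one_add_abs_log a b)).const_mul _) (ae_of_all _ fun ε => ?_)
  calc (1 + |log ε|) * bcsKernel x y ε ≤ (1 + |log ε|) * (2 / (x + y)) :=
        mul_le_mul_of_nonneg_left (bcsKernel_le hx (hr.trans_le hrxy) ε) (by positivity)
    _ ≤ (1 + |log ε|) * (2 / r) := by gcongr
    _ = 2 / r * (1 + |log ε|) := mul_comm _ _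

theorem setIntegral_Ioo_inv {a b : ℝ} (ha : 0 < a) (hab : a ≤ b) :
    ∫ ε in Ioo a b, ε⁻¹ = log (b / a) := by
  rw [← integral_Ioc_eq_integral_Ioo, ← intervalIntegral.integral_of_le hab,
    integral_inv_of_pos ha (ha.trans_le hab)]

theorem abs_log_le_setIntegral_bcsKernel {x y : ℝ} (hx : 0 ≤ x) (hy : 0 ≤ y)
    (hpos : 0 < √(x ^ 2 + y ^ 2)) (hlt : √(x ^ 2 + y ^ 2) < 1) :
    tanh (1 / 2) / 4 * |log (x ^ 2 + y ^ 2)| ≤ ∫ ε in Ioo 0 2, bcsKernel x y ε := by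
  set s := √(x ^ 2 + y ^ 2) with hs
  have hxs : x ≤ s := (le_sqrt hx (by positivity)).2 (by nlinarith)
  have hys : y ≤ s := (le_sqrt hy (by positivity)).2 (by nlinarith)
  have hxy : 0 < x + y := hpos.trans_le (sqrt_sq_add_sq_le_add hx hy)
  have hlog : |log (x ^ 2 + y ^ 2)| = 2 * log (1 / s) := by
    rw [← sq_sqrt (by positivity : 0 ≤ x ^ 2 + y ^ 2), ← hs, log_pow, one_div, log_inv,
      abs_of_neg (by push_cast; linarith [log_neg hpos hlt])]
    ring
  calc tanh (1 / 2) / 4 * |log (x ^ 2 + y ^ 2)| = ∫ ε in Ioo s 1, tanh (1 / 2) / 2 * ε⁻¹ := by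
        rw [integral_const_mul, setIntegral_Ioo_inv hpos hlt.le, hlog]
        ring
    _ ≤ ∫ ε in Ioo s 1, bcsKernel x y ε := by
        refine integral_mono_of_nonneg ?_
          (integrableOn_bcsKernel hx hy hxy measure_Ioo_lt_top.ne) ?_
        all_goals filter_upwards [ae_restrict_mem measurableSet_Ioo] with ε hε
        · have := tanh_pos (one_half_pos : (0 : ℝ) < 1 / 2)
          have := hpos.trans hε.1
          positivity
        · exact le_bcsKernel hx hy (hxs.trans hε.1.le) (hys.trans hε.1.le) (hpos.trans hε.1)
    _ ≤ ∫ ε in Ioo 0 2, bcsKernel x y ε :=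
        setIntegral_mono_set (integrableOn_bcsKernel hx hy hxy measure_Ioo_lt_top.ne)
          (ae_of_all _ (bcsKernel_nonneg x hy))
          (Ioo_subset_Ioo hpos.le one_le_two).eventuallyLE

/-- Lemma 6.2: (a) the logarithmically weighted integral of the BCS kernel over `(0,2)` is
bounded when `√(x²+y²)` is bounded away from `0`; (b) near `(x,y) = (0,0)` the unweighted
integral is bounded below by `c |ln(x²+y²)|`. -/
theorem bcs_kernel_integral_bounds :
    (∀ r : ℝ, 0 < r → ∃ C > (0:ℝ), ∀ x ∈ Set.Icc (0:ℝ) 2, ∀ y ∈ Set.Icc (0:ℝ) 1,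
      r ≤ Real.sqrt (x ^ 2 + y ^ 2) →
      (∫ ε in Set.Ioo (0:ℝ) 2,
        (1 + |Real.log ε|) * thQ (Real.sqrt (x ^ 2 + ε ^ 2)) (2 * y)
          / Real.sqrt (x ^ 2 + ε ^ 2)) ≤ C) ∧
    (∃ c > (0:ℝ), ∃ r > (0:ℝ), ∀ x ∈ Set.Icc (0:ℝ) 2, ∀ y ∈ Set.Icc (0:ℝ) 1,
      0 < Real.sqrt (x ^ 2 + y ^ 2) → Real.sqrt (x ^ 2 + y ^ 2) ≤ r →
      c * |Real.log (x ^ 2 + y ^ 2)| ≤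
        ∫ ε in Set.Ioo (0:ℝ) 2,
          thQ (Real.sqrt (x ^ 2 + ε ^ 2)) (2 * y) / Real.sqrt (x ^ 2 + ε ^ 2)) := by
  refine ⟨fun r hr => ?_, tanh (1 / 2) / 4, div_pos (tanh_pos one_half_pos) four_pos,
    1 / 2, one_half_pos, fun x hx y hy hpos hle => ?_⟩
  · have hM : 0 < ∫ ε in (0 : ℝ)..2, (1 + |log ε|) :=
      intervalIntegral.intervalIntegral_pos_of_pos (intervalIntegrable_one_add_abs_log 0 2)
        (fun ε => by positivity) two_pos
    refine ⟨2 / r * ∫ ε in (0 : ℝ)..2, (1 + |log ε|), by positivity, fun x hx y hy hrxy => ?_⟩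
    simp_rw [mul_div_assoc]
    exact setIntegral_one_add_abs_log_mul_bcsKernel_le hx.1 hy.1 hr
      (hrxy.trans (sqrt_sq_add_sq_le_add hx.1 hy.1)) zero_le_two
  · exact abs_log_le_setIntegral_bcsKernel hx.1 hy.1 hpos (hle.trans_lt one_half_lt_one)
end
end
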